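/- For the categorical model with p₁(θ) = θ, p₂(θ) = θ², p₃(θ) = θ + θ², p₄(θ) = 1 − 2θ − 2θ², θ ∈ (0, 1/4), a statistic ĝ : {1,2,3,4} → ℝ is a UMVUE if and only if ĝ(1) = ĝ(2) = ĝ(3); consequently exactly the parametric functions in span{1, θ + θ²} possess UMVUEs. -/
import Mathlib


/-- The probability mass function of the four-point categorical example:
`p₁(θ) = θ`, `p₂(θ) = θ²`, `p₃(θ) = θ + θ²`, `p₄(θ) = 1 - 2θ - 2θ²`. -/
noncomputable def catP (θ : ℝ) : Fin 4 → ℝ := ![θ, θ ^ 2, θ + θ ^ 2, 1 - 2 * θ - 2 * θ ^ 2]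

/-- `g` is a UMVUE in the four-point categorical model: it is uncorrelated under every
`θ ∈ (0, 1/4)` with every unbiased estimator of zero. -/
def IsUMVUECat (g : Fin 4 → ℝ) : Prop :=
  ∀ χ : Fin 4 → ℝ, (∀ θ ∈ Set.Ioo (0 : ℝ) (1 / 4), ∑ k, χ k * catP θ k = 0) →
    ∀ θ ∈ Set.Ioo (0 : ℝ) (1 / 4), ∑ k, g k * χ k * catP θ k = 0

theorem stmt14 :
    (∀ g : Fin 4 → ℝ, IsUMVUECat g ↔ (g 0 = g 2 ∧ g 1 = g 2)) ∧
    (∀ G : ℝ → ℝ,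
      (∃ g : Fin 4 → ℝ, IsUMVUECat g ∧
        ∀ θ ∈ Set.Ioo (0 : ℝ) (1 / 4), ∑ k, g k * catP θ k = G θ) ↔
      ∃ c₁ c₂ : ℝ, ∀ θ ∈ Set.Ioo (0 : ℝ) (1 / 4), G θ = c₁ + c₂ * (θ + θ ^ 2)) := by
  have hmem : ∀ t : ℝ, 0 < t → t < 1 / 4 → t ∈ Set.Ioo (0 : ℝ) (1 / 4) := fun t h1 h2 => ⟨h1, h2⟩
  have key : ∀ g : Fin 4 → ℝ, IsUMVUECat g ↔ (g 0 = g 2 ∧ g 1 = g 2) := by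
    intro g
    constructor
    · intro h
      have hχ : ∀ θ ∈ Set.Ioo (0 : ℝ) (1 / 4),
          ∑ k, (![-1, -1, 1, 0] : Fin 4 → ℝ) k * catP θ k = 0 := by
        intro θ _
        simp [catP, Fin.sum_univ_four]
        ring
      have h1 := h ![-1, -1, 1, 0] hχ (1/8) (hmem (1/8) (by norm_num) (by norm_num))
      have h2 := h ![-1, -1, 1, 0] hχ (1/16) (hmem (1/16) (by norm_num) (by norm_num))
      simp [catP, Fin.sum_univ_four] at h1 h2
      constructor <;> linarith
    · rintro ⟨h02, h12⟩ χ hχ θ hθ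
      have e1 := hχ (1/8) (hmem (1/8) (by norm_num) (by norm_num))
      have e2 := hχ (1/16) (hmem (1/16) (by norm_num) (by norm_num))
      have e3 := hχ (1/32) (hmem (1/32) (by norm_num) (by norm_num))
      simp [catP, Fin.sum_univ_four] at e1 e2 e3
      have hχ3 : χ 3 = 0 := by linarith
      have hs := hχ θ hθ
      simp [catP, Fin.sum_univ_four] at hs ⊢
      rw [h02, h12]
      linear_combination g 2 * hs + (g 3 - g 2) * (1 - 2*θ - 2*θ^2) * hχ3
  refine ⟨key, fun G => ⟨?_, ?_⟩⟩
  · rintro ⟨g, hg, hG⟩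
    obtain ⟨h02, h12⟩ := (key g).mp hg
    refine ⟨g 3, 2 * g 2 - 2 * g 3, fun θ hθ => ?_⟩
    rw [← hG θ hθ]
    simp [catP, Fin.sum_univ_four]
    linear_combination θ * h02 + θ^2 * h12
  · rintro ⟨c₁, c₂, hc⟩
    refine ⟨![c₁ + c₂/2, c₁ + c₂/2, c₁ + c₂/2, c₁], (key _).mpr (by simp), fun θ hθ => ?_⟩
    rw [hc θ hθ]
    simp [catP, Fin.sum_univ_four]
    ring
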